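/- For all nonnegative integers m, n and all reals α, β: G(m,n;α,β,−αβ) = α^m β^n. Consequently, if the parameters of the spatial autoregressive process satisfy γ = −αβ, then for all integers k₁, ℓ₁, k₂, ℓ₂ ≥ 1: Cov(X_{k₁,ℓ₁}, X_{k₂,ℓ₂}) = Σ_{i=1}^{min(k₁,k₂)} Σ_{j=1}^{min(ℓ₁,ℓ₂)} α^{k₁+k₂−2i} β^{ℓ₁+ℓ₂−2j}. -/

import Mathlib

open MeasureTheory ProbabilityTheory Filter

/-- `G m n α β γ = Σ_{r=0}^{min(m,n)} ((m+n−r)!/((m−r)!(n−r)!r!)) α^{m−r} β^{n−r} γ^r`. -/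
noncomputable def G (m n : ℕ) (α β γ : ℝ) : ℝ :=
  ∑ r ∈ Finset.range (min m n + 1),
    ((Nat.factorial (m + n - r) : ℝ) /
      ((Nat.factorial (m - r) : ℝ) * (Nat.factorial (n - r) : ℝ) * (Nat.factorial r : ℝ))) *
      α ^ (m - r) * β ^ (n - r) * γ ^ r

/-- The covariance of two real random variables. -/
noncomputable def cov {Ω : Type*} [MeasurableSpace Ω] (P : Measure Ω) (X Y : Ω → ℝ) : ℝ :=
  ∫ ω, (X ω - ∫ x, X x ∂P) * (Y ω - ∫ x, Y x ∂P) ∂P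

open Finset

/-!
With `γ = -αβ` the recursion factors as `(1 - α S₁) (1 - β S₂) X = ε` in the two shift operators,
so `X k ℓ = ∑ α ^ (k - i) β ^ (ℓ - j) ε i j` and the covariance formula is the inner product of two
coefficient vectors against the orthonormal innovations. Independently, every term of
`G m n α β (-αβ)` carries the factor `α ^ m β ^ n`, leaving `∑ r, (-1) ^ r C(n, r) C(m + n - r, n)`:
the `n`-th forward difference of `x ↦ C(x, n)` at `m`, which is `1`.
-/

theorem sum_range_neg_one_pow_mul_choose_mul_choose (m n : ℕ) :
    ∑ r ∈ range (n + 1), (-1 : ℤ) ^ r * n.choose r * (m + n - r).choose n = 1 := by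
  have h := congrFun (fwdDiff_iter_choose 0 n) m
  simp only [fwdDiff_iter_eq_sum_shift, smul_eq_mul, mul_one, add_zero,
    Nat.choose_zero_right, Nat.cast_one] at h
  refine (sum_range_reflect _ _).symm.trans (Eq.trans (sum_congr rfl fun r hr => ?_) h)
  have : r ≤ n := Nat.lt_succ_iff.mp (mem_range.mp hr)
  rw [Nat.add_sub_cancel, Nat.choose_symm this, show m + n - (n - r) = m + r by omega]

theorem factorial_div_factorials_eq_choose_mul_choose {m n r : ℕ} (hm : r ≤ m)
    (hn : r ≤ n) :
    ((m + n - r).factorial : ℝ) / ((m - r).factorial * (n - r).factorial * r.factorial) =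
      n.choose r * (m + n - r).choose n := by
  have hn' := Nat.choose_mul_factorial_mul_factorial hn
  have hmn := Nat.choose_mul_factorial_mul_factorial (show n ≤ m + n - r by omega)
  rw [show m + n - r - n = m - r by omega] at hmn
  rw [div_eq_iff (by positivity), ← hmn, ← hn']
  push_cast
  ring

theorem G_neg_mul (m n : ℕ) (α β : ℝ) : G m n α β (-(α * β)) = α ^ m * β ^ n := by
  have hterm : ∀ r ∈ range (min m n + 1),
      (m + n - r).factorial / ((m - r).factorial * (n - r).factorial * r.factorial : ℝ) *
          α ^ (m - r) * β ^ (n - r) * (-(α * β)) ^ r =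
        (((-1 : ℤ) ^ r * n.choose r * (m + n - r).choose n : ℤ) : ℝ) * (α ^ m * β ^ n) := by
    intro r hr
    have hrm : r ≤ m := by have := mem_range.mp hr; omega
    have hrn : r ≤ n := by have := mem_range.mp hr; omega
    rw [factorial_div_factorials_eq_choose_mul_choose hrm hrn, neg_pow, mul_pow,
      ← pow_sub_mul_pow α hrm, ← pow_sub_mul_pow β hrn]
    push_cast
    ring
  have hvanish : ∀ r ∈ range (n + 1), r ∉ range (min m n + 1) →
      (-1 : ℤ) ^ r * n.choose r * (m + n - r).choose n = 0 := by
    intro r hr hr'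
    rw [mem_range] at hr hr'
    rw [Nat.choose_eq_zero_of_lt (show m + n - r < n by omega), Nat.cast_zero, mul_zero]
  rw [G, sum_congr rfl hterm, ← sum_mul, ← Int.cast_sum,
    sum_subset (range_subset_range.mpr (by omega)) hvanish,
    sum_range_neg_one_pow_mul_choose_mul_choose, Int.cast_one, one_mul]

theorem sum_Icc_succ_pow_sub_mul {R : Type*} [CommSemiring R] (a : R) (f : ℕ → R) (k : ℕ) :
    ∑ i ∈ Icc 1 (k + 1), a ^ (k + 1 - i) * f i =
      a * ∑ i ∈ Icc 1 k, a ^ (k - i) * f i + f (k + 1) := by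
  rw [sum_Icc_succ_top (by omega), Nat.sub_self, pow_zero, one_mul, mul_sum]
  congr 1
  refine sum_congr rfl fun i hi => ?_
  rw [show k + 1 - i = k - i + 1 by have := (mem_Icc.mp hi).2; omega, pow_succ]
  ring

theorem eq_sum_pow_mul_pow_of_recursion {R : Type*} [CommRing R] (a b : R) (x e : ℕ → ℕ → R)
    (hx0 : ∀ k, x k 0 = 0) (h0x : ∀ ℓ, x 0 ℓ = 0)
    (hrec : ∀ k ℓ, x (k + 1) (ℓ + 1) =
      a * x k (ℓ + 1) + b * x (k + 1) ℓ + -(a * b) * x k ℓ + e (k + 1) (ℓ + 1))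
    (k ℓ : ℕ) :
    x k ℓ = ∑ p ∈ Icc 1 k ×ˢ Icc 1 ℓ, a ^ (k - p.1) * b ^ (ℓ - p.2) * e p.1 p.2 := by
  set row : ℕ → ℕ → R := fun i ℓ => ∑ j ∈ Icc 1 ℓ, b ^ (ℓ - j) * e i j
  suffices h : x k ℓ = ∑ i ∈ Icc 1 k, a ^ (k - i) * row i ℓ by
    simp only [h, row, sum_product, mul_sum, mul_assoc]
  induction k generalizing ℓ with
  | zero => simp [h0x]
  | succ k ihk =>
    induction ℓ with
    | zero => simp [hx0, row]
    | succ ℓ ihℓ =>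
      have hrow : row (k + 1) (ℓ + 1) = b * row (k + 1) ℓ + e (k + 1) (ℓ + 1) :=
        sum_Icc_succ_pow_sub_mul b _ ℓ
      rw [hrec, ihk, ihk, ihℓ, sum_Icc_succ_pow_sub_mul, sum_Icc_succ_pow_sub_mul, hrow]
      ring

theorem sum_Icc_prod_inter_pow_mul_pow {R : Type*} [CommSemiring R] (a b : R)
    (k₁ ℓ₁ k₂ ℓ₂ : ℕ) :
    ∑ p ∈ (Icc 1 k₁ ×ˢ Icc 1 ℓ₁) ∩ (Icc 1 k₂ ×ˢ Icc 1 ℓ₂),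
        a ^ (k₁ - p.1) * b ^ (ℓ₁ - p.2) * (a ^ (k₂ - p.1) * b ^ (ℓ₂ - p.2)) =
      ∑ i ∈ Icc 1 (min k₁ k₂), ∑ j ∈ Icc 1 (min ℓ₁ ℓ₂),
        a ^ (k₁ + k₂ - 2 * i) * b ^ (ℓ₁ + ℓ₂ - 2 * j) := by
  have hinter : (Icc 1 k₁ ×ˢ Icc 1 ℓ₁) ∩ (Icc 1 k₂ ×ˢ Icc 1 ℓ₂) =
      Icc 1 (min k₁ k₂) ×ˢ Icc 1 (min ℓ₁ ℓ₂) := by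
    ext p
    simp only [mem_inter, mem_product, mem_Icc]
    omega
  rw [hinter, sum_product]
  refine sum_congr rfl fun i hi => sum_congr rfl fun j hj => ?_
  have hi := (mem_Icc.mp hi).2
  have hj := (mem_Icc.mp hj).2
  rw [show k₁ + k₂ - 2 * i = (k₁ - i) + (k₂ - i) by omega,
    show ℓ₁ + ℓ₂ - 2 * j = (ℓ₁ - j) + (ℓ₂ - j) by omega, pow_add, pow_add]
  ring

section Orthonormal

variable {Ω ι : Type*} [MeasurableSpace Ω] {P : Measure Ω} [IsFiniteMeasure P] [DecidableEq ι]
  {ξ : ι → Ω → ℝ}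

theorem covariance_eq_ite_of_iIndepFun (hmeas : ∀ i, AEMeasurable (ξ i) P)
    (hindep : iIndepFun ξ P) (hvar : ∀ i, Var[ξ i; P] = 1) (i j : ι) :
    cov[ξ i, ξ j; P] = if i = j then 1 else 0 := by
  split_ifs with hij
  · rw [hij, covariance_self (hmeas j), hvar]
  · have hL2 : ∀ i, MemLp (ξ i) 2 P := fun i =>
      memLp_two_of_variance_ne_zero (hmeas i).aestronglyMeasurable (by simp [hvar])
    exact (hindep.indepFun hij).covariance_eq_zero (hL2 i) (hL2 j)

theorem covariance_sum_mul_sum_of_orthonormal {s t : Finset ι}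
    (hs : ∀ i ∈ s, MemLp (ξ i) 2 P) (ht : ∀ j ∈ t, MemLp (ξ j) 2 P)
    (horth : ∀ i ∈ s, ∀ j ∈ t, cov[ξ i, ξ j; P] = if i = j then 1 else 0) (c d : ι → ℝ) :
    cov[fun ω => ∑ i ∈ s, c i * ξ i ω, fun ω => ∑ j ∈ t, d j * ξ j ω; P] =
      ∑ i ∈ s ∩ t, c i * d i := by
  rw [covariance_fun_sum_fun_sum' (X := fun i ω => c i * ξ i ω) (Y := fun j ω => d j * ξ j ω)
    (fun i hi => (hs i hi).const_mul (c i)) (fun j hj => (ht j hj).const_mul (d j)),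
    ← sum_ite_mem]
  refine sum_congr rfl fun i hi => ?_
  simp_rw [covariance_const_mul_left, covariance_const_mul_right]
  rw [sum_congr rfl fun j hj => by rw [horth i hi j hj]]
  simp only [mul_ite, mul_one, mul_zero, sum_ite_eq]

end Orthonormal

theorem doubly_geometric_case_general
    {Ω : Type*} [MeasurableSpace Ω] (P : Measure Ω) [IsProbabilityMeasure P]
    (ε : ℕ → ℕ → Ω → ℝ)
    (hmeas : ∀ k ℓ : ℕ, Measurable (ε k ℓ))
    (hindep : iIndepFun
      (fun p : {p : ℕ × ℕ // 1 ≤ p.1 ∧ 1 ≤ p.2} => ε p.1.1 p.1.2) P)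
    (hvar : ∀ k ℓ : ℕ, 1 ≤ k → 1 ≤ ℓ → variance (ε k ℓ) P = 1)
    (α β γ : ℝ)
    (X : ℕ → ℕ → Ω → ℝ)
    (hrec : ∀ k ℓ : ℕ, 1 ≤ k → 1 ≤ ℓ → ∀ ω : Ω,
      X k ℓ ω = α * X (k - 1) ℓ ω + β * X k (ℓ - 1) ω + γ * X (k - 1) (ℓ - 1) ω + ε k ℓ ω)
    (hbd1 : ∀ k : ℕ, ∀ ω : Ω, X k 0 ω = 0)
    (hbd2 : ∀ ℓ : ℕ, ∀ ω : Ω, X 0 ℓ ω = 0)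
    (hγ : γ = -(α * β)) :
    (∀ m n : ℕ, G m n α β (-(α * β)) = α ^ m * β ^ n) ∧
    ∀ k₁ ℓ₁ k₂ ℓ₂ : ℕ, 1 ≤ k₁ → 1 ≤ ℓ₁ → 1 ≤ k₂ → 1 ≤ ℓ₂ →
      cov P (X k₁ ℓ₁) (X k₂ ℓ₂) =
        ∑ i ∈ Finset.Icc 1 (min k₁ k₂), ∑ j ∈ Finset.Icc 1 (min ℓ₁ ℓ₂),
          α ^ (k₁ + k₂ - 2 * i) * β ^ (ℓ₁ + ℓ₂ - 2 * j) := by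
  subst hγ
  refine ⟨fun m n => G_neg_mul m n α β, fun k₁ ℓ₁ k₂ ℓ₂ _ _ _ _ => ?_⟩
  have hX : ∀ k ℓ, X k ℓ = fun ω =>
      ∑ p ∈ Icc 1 k ×ˢ Icc 1 ℓ, α ^ (k - p.1) * β ^ (ℓ - p.2) * ε p.1 p.2 ω := fun k ℓ =>
    funext fun ω => eq_sum_pow_mul_pow_of_recursion α β (fun k ℓ => X k ℓ ω)
      (fun k ℓ => ε k ℓ ω) (hbd1 · ω) (hbd2 · ω)
      (fun k ℓ => by
        simpa only [Nat.add_sub_cancel] using hrec (k + 1) (ℓ + 1) (by omega) (by omega) ω) k ℓ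
  have hpos : ∀ {k ℓ : ℕ} {p : ℕ × ℕ}, p ∈ Icc 1 k ×ˢ Icc 1 ℓ → 1 ≤ p.1 ∧ 1 ≤ p.2 :=
    fun hp => ⟨(mem_Icc.mp (mem_product.mp hp).1).1, (mem_Icc.mp (mem_product.mp hp).2).1⟩
  have hL2 : ∀ {k ℓ : ℕ}, ∀ p ∈ Icc 1 k ×ˢ Icc 1 ℓ, MemLp (ε p.1 p.2) 2 P := fun p hp =>
    memLp_two_of_variance_ne_zero (hmeas _ _).aestronglyMeasurable
      (by rw [hvar _ _ (hpos hp).1 (hpos hp).2]; exact one_ne_zero)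
  have horth : ∀ p ∈ Icc 1 k₁ ×ˢ Icc 1 ℓ₁, ∀ q ∈ Icc 1 k₂ ×ˢ Icc 1 ℓ₂,
      cov[ε p.1 p.2, ε q.1 q.2; P] = if p = q then 1 else 0 := fun p hp q hq => by
    simpa [Subtype.ext_iff] using covariance_eq_ite_of_iIndepFun
      (fun i => (hmeas _ _).aemeasurable) hindep (fun i => hvar _ _ i.2.1 i.2.2)
      ⟨p, hpos hp⟩ ⟨q, hpos hq⟩
  rw [hX, hX]
  -- `cov P` is definitionally Mathlib's `covariance`.
  exact (covariance_sum_mul_sum_of_orthonormal (ξ := fun p => ε p.1 p.2) hL2 hL2 horth _ _).trans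
    (sum_Icc_prod_inter_pow_mul_pow α β k₁ ℓ₁ k₂ ℓ₂)

theorem doubly_geometric_case
    {Ω : Type*} [MeasurableSpace Ω] (P : Measure Ω) [IsProbabilityMeasure P]
    (ε : ℕ → ℕ → Ω → ℝ)
    (hmeas : ∀ k ℓ : ℕ, Measurable (ε k ℓ))
    (hindep : iIndepFun
      (fun p : {p : ℕ × ℕ // 1 ≤ p.1 ∧ 1 ≤ p.2} => ε p.1.1 p.1.2) P)
    (hmean : ∀ k ℓ : ℕ, 1 ≤ k → 1 ≤ ℓ → ∫ ω, ε k ℓ ω ∂P = 0)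
    (hvar : ∀ k ℓ : ℕ, 1 ≤ k → 1 ≤ ℓ → variance (ε k ℓ) P = 1)
    (α β γ : ℝ)
    (X : ℕ → ℕ → Ω → ℝ)
    (hrec : ∀ k ℓ : ℕ, 1 ≤ k → 1 ≤ ℓ → ∀ ω : Ω,
      X k ℓ ω = α * X (k - 1) ℓ ω + β * X k (ℓ - 1) ω + γ * X (k - 1) (ℓ - 1) ω + ε k ℓ ω)
    (hbd1 : ∀ k : ℕ, ∀ ω : Ω, X k 0 ω = 0)
    (hbd2 : ∀ ℓ : ℕ, ∀ ω : Ω, X 0 ℓ ω = 0)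
    (hγ : γ = -(α * β)) :
    (∀ m n : ℕ, G m n α β (-(α * β)) = α ^ m * β ^ n) ∧
    ∀ k₁ ℓ₁ k₂ ℓ₂ : ℕ, 1 ≤ k₁ → 1 ≤ ℓ₁ → 1 ≤ k₂ → 1 ≤ ℓ₂ →
      cov P (X k₁ ℓ₁) (X k₂ ℓ₂) =
        ∑ i ∈ Finset.Icc 1 (min k₁ k₂), ∑ j ∈ Finset.Icc 1 (min ℓ₁ ℓ₂),
          α ^ (k₁ + k₂ - 2 * i) * β ^ (ℓ₁ + ℓ₂ - 2 * j) :=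
  doubly_geometric_case_general P ε hmeas hindep hvar α β γ X hrec hbd1 hbd2 hγ
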